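/- Let R be a ring and let M be an R-module of finite length. Then there are only finitely many isomorphism classes of R-modules N such that N is a direct summand of M (i.e. there exists an R-module P with N ⊕ P ≅ M). -/

import Mathlib

/-!
A nonzero module `W` of finite length splits as `A × B` with `End A` local: split off an
indecomposable summand, whose endomorphisms are, by Fitting's lemma, units or nilpotent.
If `N × P ≃ A × B`, the composites `A → N → A` and `A → P → A` through the components of the
isomorphism add up to the identity, so one of them is a unit. Then either `N ≃ A × N₀` with
`N₀ × P ≃ B`, or `N × P₀ ≃ B` for a submodule `P₀` of `P`; in both cases we reduce to summands
of `B`, which has smaller length. So every summand of `W` is isomorphic to a summand of `B` or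
to `A` times one.
-/

open LinearMap Submodule

section Retract
variable {R X A : Type*} [Ring R] [AddCommGroup X] [Module R X] [AddCommGroup A] [Module R A]
  {φ ψ : X →ₗ[R] A} {s : A →ₗ[R] X}

theorem isCompl_range_ker_of_isUnit_comp (h : IsUnit (φ ∘ₗ s)) :
    IsCompl (range s) (ker φ) := by
  have hbij := (Module.End.isUnit_iff _).mp h
  refine ⟨disjoint_def.mpr ?_, codisjoint_iff_exists_add_eq.mpr fun x ↦ ?_⟩
  · rintro _ ⟨a, rfl⟩ ha
    rw [hbij.injective (show (φ ∘ₗ s) a = (φ ∘ₗ s) 0 by simpa using ha), map_zero]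
  · obtain ⟨a, ha⟩ := hbij.surjective (φ x)
    exact ⟨s a, x - s a, ⟨a, rfl⟩, by simpa [sub_eq_zero] using ha.symm, add_sub_cancel _ _⟩

theorem nonempty_linearEquiv_prod_ker_of_isUnit_comp (h : IsUnit (φ ∘ₗ s)) :
    Nonempty (X ≃ₗ[R] A × ker φ) :=
  have hs : Function.Injective s := ((Module.End.isUnit_iff _).mp h).injective.of_comp (f := φ)
  ⟨(prodEquivOfIsCompl _ _ (isCompl_range_ker_of_isUnit_comp h)).symm ≪≫ₗ
    (LinearEquiv.ofInjective s hs).symm.prodCongr (.refl R _)⟩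

theorem nonempty_ker_linearEquiv_ker_of_isUnit_comp (hφ : IsUnit (φ ∘ₗ s))
    (hψ : IsUnit (ψ ∘ₗ s)) : Nonempty (ker φ ≃ₗ[R] ker ψ) :=
  ⟨(quotientEquivOfIsCompl _ _ (isCompl_range_ker_of_isUnit_comp hφ)).symm ≪≫ₗ
    quotientEquivOfIsCompl _ _ (isCompl_range_ker_of_isUnit_comp hψ)⟩

end Retract

section Exchange
variable {R N P A B : Type*} [Ring R] [AddCommGroup N] [Module R N] [AddCommGroup P] [Module R P]
  [AddCommGroup A] [Module R A] [AddCommGroup B] [Module R B]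

theorem nonempty_ker_fst_comp_linearEquiv (e : N ≃ₗ[R] A × B) :
    Nonempty (ker (fst R A B ∘ₗ e.toLinearMap) ≃ₗ[R] B) := by
  have h : range (e.symm.toLinearMap ∘ₗ inr R A B) = ker (fst R A B ∘ₗ e.toLinearMap) := by
    rw [ker_comp, ker_fst, range_comp, map_equiv_eq_comap_symm, e.symm_symm]
  exact ⟨(LinearEquiv.ofEq _ _ h).symm ≪≫ₗ (LinearEquiv.ofInjective
    (e.symm.toLinearMap ∘ₗ inr R A B) (e.symm.injective.comp inr_injective)).symm⟩

theorem nonempty_ker_comp_fst (f : N →ₗ[R] A) :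
    Nonempty (ker (f ∘ₗ fst R N P) ≃ₗ[R] ker f × P) := by
  have h : range ((ker f).subtype.prodMap (id : P →ₗ[R] P)) = ker (f ∘ₗ fst R N P) := by
    rw [range_prodMap, range_subtype, range_id, ker_comp, comap_fst]
  exact ⟨(LinearEquiv.ofEq _ _ h).symm ≪≫ₗ (LinearEquiv.ofInjective _
    (Prod.map_injective.mpr ⟨(ker f).injective_subtype, Function.injective_id⟩)).symm⟩

theorem exists_exchange_of_isUnit (e : (N × P) ≃ₗ[R] (A × B))
    (h : IsUnit ((fst R A B ∘ₗ e.toLinearMap ∘ₗ inl R N P) ∘ₗ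
      (fst R N P ∘ₗ e.symm.toLinearMap ∘ₗ inl R A B))) :
    ∃ N₀ : Submodule R N, Nonempty (N ≃ₗ[R] A × N₀) ∧ Nonempty ((N₀ × P) ≃ₗ[R] B) := by
  set α := fst R A B ∘ₗ e.toLinearMap ∘ₗ inl R N P
  set γ := fst R N P ∘ₗ e.symm.toLinearMap ∘ₗ inl R A B
  refine ⟨ker α, nonempty_linearEquiv_prod_ker_of_isUnit_comp h, ?_⟩
  -- `ker (α ∘ fst) = ker α × P` and `ker (fst ∘ e) ≃ B` are both complements of
  -- `range (inl ∘ γ)`, on which `α ∘ fst` and `fst ∘ e` both restrict to the unit `α ∘ γ`.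
  obtain ⟨e₁⟩ := nonempty_ker_linearEquiv_ker_of_isUnit_comp (φ := α ∘ₗ fst R N P)
    (ψ := fst R A B ∘ₗ e.toLinearMap) (s := inl R N P ∘ₗ γ) h h
  obtain ⟨e₂⟩ := nonempty_ker_comp_fst (P := P) α
  obtain ⟨e₃⟩ := nonempty_ker_fst_comp_linearEquiv e
  exact ⟨e₂.symm ≪≫ₗ e₁ ≪≫ₗ e₃⟩

theorem exists_exchange_of_isLocalRing [IsLocalRing (Module.End R A)] (e : (N × P) ≃ₗ[R] (A × B)) :
    (∃ N₀ : Submodule R N, Nonempty (N ≃ₗ[R] A × N₀) ∧ Nonempty ((N₀ × P) ≃ₗ[R] B)) ∨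
      ∃ P₀ : Submodule R P, Nonempty ((N × P₀) ≃ₗ[R] B) := by
  set e' := LinearEquiv.prodComm R P N ≪≫ₗ e
  -- the second summand is the composite `A → P → A`, written through the swapped `e'` so
  -- that `exists_exchange_of_isUnit` applies to it
  have hsum : (fst R A B ∘ₗ e.toLinearMap ∘ₗ inl R N P) ∘ₗ
        (fst R N P ∘ₗ e.symm.toLinearMap ∘ₗ inl R A B) +
      (fst R A B ∘ₗ e'.toLinearMap ∘ₗ inl R P N) ∘ₗ
        (fst R P N ∘ₗ e'.symm.toLinearMap ∘ₗ inl R A B) = 1 := by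
    ext a
    simp [e', ← Prod.fst_add, ← map_add]
  refine (IsLocalRing.isUnit_or_isUnit_of_add_one hsum).imp (exists_exchange_of_isUnit e)
    fun h ↦ ?_
  obtain ⟨P₀, -, ⟨f⟩⟩ := exists_exchange_of_isUnit e' h
  exact ⟨P₀, ⟨LinearEquiv.prodComm R N P₀ ≪≫ₗ f⟩⟩

end Exchange

section Fitting
variable {R A : Type*} [Ring R] [AddCommGroup A] [Module R A]

theorem isLocalRing_end_of_indecomposable [IsNoetherian R A] [IsArtinian R A] [Nontrivial A]
    (hA : ∀ p q : Submodule R A, IsCompl p q → p = ⊥ ∨ q = ⊥) :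
    IsLocalRing (Module.End R A) := by
  refine .of_isUnit_or_isUnit_one_sub_self fun f ↦ ?_
  obtain ⟨n, hn, hcompl⟩ :=
    ((Filter.eventually_ge_atTop 1).and f.eventually_isCompl_ker_pow_range_pow).exists
  refine (hA _ _ hcompl).imp (fun hker ↦ ?_) fun hrange ↦ ?_
  · have hf : Function.Injective f := by
      rw [← ker_eq_bot, eq_bot_iff, ← hker]
      simpa using f.iterateKer.monotone hn
    exact (Module.End.isUnit_iff f).mpr (IsArtinian.bijective_of_injective_endomorphism f hf)
  · exact IsNilpotent.isUnit_one_sub ⟨n, range_eq_bot.mp hrange⟩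

end Fitting

section FiniteLength
variable {R : Type*} [Ring R] {W A B : Type*} [AddCommGroup W] [Module R W]
  [AddCommGroup A] [Module R A] [AddCommGroup B] [Module R B]

theorem IsFiniteLength.isFiniteLength_and_length_lt_of_linearEquiv_prod (hW : IsFiniteLength R W)
    (e : W ≃ₗ[R] A × B) [Nontrivial A] :
    IsFiniteLength R B ∧ Module.length R B < Module.length R W := by
  have hW' := Module.length_ne_top_iff.mpr hW
  have hlen : Module.length R W = Module.length R A + Module.length R B := by
    rw [e.length_eq, Module.length_prod]
  have hlt : Module.length R B < Module.length R W := by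
    rw [hlen] at hW' ⊢
    exact ENat.lt_add_left (WithTop.add_ne_top.mp hW').2 Module.length_pos
  exact ⟨Module.length_ne_top_iff.mp (hlt.trans_le le_top).ne, hlt⟩

end FiniteLength

section Summands
variable {R : Type u} [Ring R]

theorem IsFiniteLength.exists_linearEquiv_prod_isLocalRing {W : Type u} [AddCommGroup W]
    [Module R W] (hW : IsFiniteLength R W) [Nontrivial W] :
    ∃ A B : ModuleCat.{u} R, IsLocalRing (Module.End R A) ∧ Nonempty (W ≃ₗ[R] A × B) := by
  induction hn : Module.length R W using WellFoundedLT.induction generalizing W with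
  | ind n ih =>
  by_cases hind : ∀ p q : Submodule R W, IsCompl p q → p = ⊥ ∨ q = ⊥
  · obtain ⟨_, _⟩ := isFiniteLength_iff_isNoetherian_isArtinian.mp hW
    exact ⟨.of R W, .of R PUnit, isLocalRing_end_of_indecomposable hind,
      ⟨LinearEquiv.prodUnique.symm⟩⟩
  push Not at hind
  obtain ⟨p, q, hpq, hp, hq⟩ := hind
  have : Nontrivial p := nontrivial_iff_ne_bot.mpr hp
  have : Nontrivial q := nontrivial_iff_ne_bot.mpr hq
  let e : W ≃ₗ[R] q × p := (prodEquivOfIsCompl q p hpq.symm).symm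
  obtain ⟨hpfin, hlt⟩ := hW.isFiniteLength_and_length_lt_of_linearEquiv_prod e
  obtain ⟨A, B, hA, ⟨f⟩⟩ := ih _ (hn ▸ hlt) hpfin rfl
  exact ⟨A, .of R (B × q), hA,
    ⟨(prodEquivOfIsCompl p q hpq).symm ≪≫ₗ f.prodCongr (.refl R q) ≪≫ₗ .prodAssoc R A B q⟩⟩

def HasFinitelyManySummandClasses (R : Type u) [Ring R] (M : Type u) [AddCommGroup M]
    [Module R M] : Prop :=
  ∃ L : List (ModuleCat.{u} R), ∀ (N : Type u) [AddCommGroup N] [Module R N],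
    (∃ P : ModuleCat.{u} R, Nonempty ((N × P) ≃ₗ[R] M)) → ∃ G ∈ L, Nonempty (N ≃ₗ[R] G)

namespace HasFinitelyManySummandClasses

variable {M M' : Type u} [AddCommGroup M] [Module R M] [AddCommGroup M'] [Module R M']

theorem of_subsingleton [Subsingleton M] : HasFinitelyManySummandClasses R M := by
  refine ⟨[.of R PUnit], fun N _ _ ⟨P, ⟨e⟩⟩ ↦ ⟨_, List.mem_singleton_self _, ?_⟩⟩
  have : Subsingleton N := (e.toEquiv.injective.comp (Prod.mk_left_injective 0)).subsingleton
  exact ⟨LinearEquiv.ofSubsingleton _ _⟩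

theorem of_linearEquiv (e : M ≃ₗ[R] M') (h : HasFinitelyManySummandClasses R M) :
    HasFinitelyManySummandClasses R M' :=
  let ⟨L, hL⟩ := h
  ⟨L, fun N _ _ ⟨P, ⟨f⟩⟩ ↦ hL N ⟨P, ⟨f ≪≫ₗ e.symm⟩⟩⟩

theorem prod {A B : Type u} [AddCommGroup A] [Module R A] [AddCommGroup B] [Module R B]
    [IsLocalRing (Module.End R A)] (h : HasFinitelyManySummandClasses R B) :
    HasFinitelyManySummandClasses R (A × B) := by
  obtain ⟨L, hL⟩ := h
  refine ⟨L ++ L.map fun G ↦ .of R (A × G), fun N _ _ ⟨P, ⟨e⟩⟩ ↦ ?_⟩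
  rcases exists_exchange_of_isLocalRing e with ⟨N₀, ⟨f⟩, ⟨g⟩⟩ | ⟨P₀, ⟨g⟩⟩
  · obtain ⟨G, hG, ⟨f₀⟩⟩ := hL N₀ ⟨P, ⟨g⟩⟩
    exact ⟨_, List.mem_append_right _ (List.mem_map_of_mem hG),
      ⟨f ≪≫ₗ (LinearEquiv.refl R A).prodCongr f₀⟩⟩
  · obtain ⟨G, hG, hN⟩ := hL N ⟨.of R P₀, ⟨g⟩⟩
    exact ⟨G, List.mem_append_left _ hG, hN⟩

end HasFinitelyManySummandClasses

theorem IsFiniteLength.hasFinitelyManySummandClasses {M : Type u} [AddCommGroup M] [Module R M]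
    (hM : IsFiniteLength R M) : HasFinitelyManySummandClasses R M := by
  induction hn : Module.length R M using WellFoundedLT.induction generalizing M with
  | ind n ih =>
  rcases subsingleton_or_nontrivial M with _ | _
  · exact .of_subsingleton
  obtain ⟨A, B, hA, ⟨e⟩⟩ := hM.exists_linearEquiv_prod_isLocalRing
  have : Nontrivial A := (subsingleton_or_nontrivial A).resolve_left fun _ ↦
    not_subsingleton (Module.End R A) inferInstance
  obtain ⟨hB, hlt⟩ := hM.isFiniteLength_and_length_lt_of_linearEquiv_prod e
  exact ((ih _ (hn ▸ hlt) hB rfl).prod).of_linearEquiv e.symm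

end Summands

/-- Let `R` be a ring and `M` an `R`-module of finite length. Then there are only finitely
many isomorphism classes of `R`-modules `N` that are direct summands of `M`, i.e. such that
`N ⊕ P ≅ M` for some `R`-module `P`. -/
theorem finitely_many_direct_summands_of_finite_length
    (R : Type u) [Ring R] (M : Type u) [AddCommGroup M] [Module R M]
    (hM : IsFiniteLength R M) :
    ∃ (k : ℕ) (F : Fin k → ModuleCat.{u} R),
      ∀ (N : Type u) [AddCommGroup N] [Module R N],
        (∃ P : ModuleCat.{u} R, Nonempty ((N × P) ≃ₗ[R] M)) →
          ∃ i : Fin k, Nonempty (N ≃ₗ[R] F i) := by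
  obtain ⟨L, hL⟩ := hM.hasFinitelyManySummandClasses
  refine ⟨L.length, L.get, fun N _ _ hN ↦ ?_⟩
  obtain ⟨G, hG, hNG⟩ := hL N hN
  obtain ⟨i, rfl⟩ := List.get_of_mem hG
  exact ⟨i, hNG⟩
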